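/- arXiv:math/0308104 — 3 statements merged into one kernel-verified Lean document; each statement's English description precedes it below -/
import Mathlib

section
/- Let M ⊆ H²(ℂ^d) ⊗ ℂ^r be a closed invariant subspace for the d-shift of rank r generated by a set of monomials. Then the operator S_1^*S_1 leaves M invariant, and consequently the restriction of (1 − P_M)S_1^* to the closed subspace closure(S_1 M) is zero. -/
open scoped ENNReal

noncomputable section

set_option synthInstance.maxHeartbeats 400000
set_option maxHeartbeats 1000000

namespace Arveson

/-- The `n`-th approximation number of a bounded operator between complex normed spaces:
the distance from `T` to the set of operators of rank at most `n`.  For operators between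
Hilbert spaces this is precisely the `n`-th singular value of `T`. -/
noncomputable def approxNum {H K : Type*} [NormedAddCommGroup H] [NormedSpace ℂ H]
    [NormedAddCommGroup K] [NormedSpace ℂ K] (T : H →L[ℂ] K) (n : ℕ) : ℝ :=
  sInf {c : ℝ | ∃ F : H →L[ℂ] K, Module.rank ℂ (LinearMap.range (F : H →ₗ[ℂ] K)) ≤ n ∧ c = ‖T - F‖}

/-- Membership in the Schatten–von Neumann class `𝓛^p`: the singular value sequence
(= the sequence of approximation numbers) is `p`-summable. -/
def MemSchatten {H K : Type*} [NormedAddCommGroup H] [NormedSpace ℂ H]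
    [NormedAddCommGroup K] [NormedSpace ℂ K] (p : ℝ) (T : H →L[ℂ] K) : Prop :=
  Summable fun n => approxNum T n ^ p

/-- Membership in `𝓛^p` for an extended real exponent `p`, where `𝓛^∞` is interpreted as
the class of compact operators. -/
def MemSchattenE {H K : Type*} [NormedAddCommGroup H] [NormedSpace ℂ H]
    [NormedAddCommGroup K] [NormedSpace ℂ K] (p : ℝ≥0∞) (T : H →L[ℂ] K) : Prop :=
  if p = ∞ then IsCompactOperator T else MemSchatten p.toReal T

/-- The orthogonal projection onto a closed subspace `M`, as an operator `H →L[ℂ] H`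
(junk value `0` if `M` is not closed). -/
noncomputable def orthProjCLM {H : Type*} [NormedAddCommGroup H] [InnerProductSpace ℂ H]
    [CompleteSpace H] (M : Submodule ℂ H) : H →L[ℂ] H :=
  open scoped Classical in
  if h : IsClosed (M : Set H) then
    haveI : CompleteSpace M := h.completeSpace_coe
    M.subtypeL.comp M.orthogonalProjection
  else 0

/-- `‖z^n‖²` in the Drury–Arveson space `H²(ℂ^d)`: `n₁!⋯n_d!/(n₁+⋯+n_d)!`. -/
def daWeight {d : ℕ} (n : Fin d → ℕ) : ℝ :=
  ((∏ i, (n i).factorial : ℕ) : ℝ) / (((∑ i, n i).factorial : ℕ) : ℝ)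

/-- An abstract presentation of the `d`-shift `(S₁,…,S_d)` acting on `H²(ℂ^d) ⊗ E`
(the symmetric Fock space / Drury–Arveson space with coefficients in `E`).
`mono n` sends `ζ : E` to the monomial `z^n ⊗ ζ`; the axioms say that the monomials are
mutually orthogonal with `⟪z^n ⊗ ζ, z^n ⊗ η⟫ = (n₁!⋯n_d!/(n₁+⋯+n_d)!)·⟪ζ, η⟫`, that
they span a dense subspace, and that `S_k (z^n ⊗ ζ) = z^{n+e_k} ⊗ ζ`.  These axioms
determine the `d`-shift of rank `dim E` uniquely up to unitary equivalence. -/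
structure DShift (d : ℕ) (E : Type*) [NormedAddCommGroup E] [InnerProductSpace ℂ E]
    (H : Type*) [NormedAddCommGroup H] [InnerProductSpace ℂ H] where
  mono : (Fin d → ℕ) → E →ₗ[ℂ] H
  S : Fin d → H →L[ℂ] H
  inner_mono : ∀ (n m : Fin d → ℕ) (ζ η : E),
    (inner ℂ (mono n ζ) (mono m η) : ℂ) =
      if n = m then (daWeight n : ℂ) * (inner ℂ ζ η : ℂ) else 0
  total : (Submodule.span ℂ {x : H | ∃ n ζ, x = mono n ζ}).topologicalClosure = ⊤
  shift_mono : ∀ (k : Fin d) (n : Fin d → ℕ) (ζ : E),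
    S k (mono n ζ) = mono (fun i => if i = k then n i + 1 else n i) ζ

variable {d : ℕ} {E : Type*} [NormedAddCommGroup E] [InnerProductSpace ℂ E]
  {H₀ : Type*} [NormedAddCommGroup H₀] [InnerProductSpace ℂ H₀]

/-- `M` is invariant under each of the operators `S₁,…,S_d`. -/
def IsInvariant (D : DShift d E H₀) (M : Submodule ℂ H₀) : Prop :=
  ∀ k : Fin d, ∀ x ∈ M, D.S k x ∈ M

/-- `M` is a closed invariant subspace for the `d`-shift which is generated, as a closed
invariant subspace, by a set `F` of monomials `z^n ⊗ ζ`: that is, `M` is the smallest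
closed invariant subspace containing `F`. -/
def IsMonomialGenerated (D : DShift d E H₀) (M : Submodule ℂ H₀) : Prop :=
  IsClosed (M : Set H₀) ∧ IsInvariant D M ∧
    ∃ F : Set H₀, (∀ f ∈ F, ∃ n ζ, f = D.mono n ζ) ∧ F ⊆ (M : Set H₀) ∧
      ∀ N : Submodule ℂ H₀, IsClosed (N : Set H₀) → IsInvariant D N →
        F ⊆ (N : Set H₀) → M ≤ N

/-!
A monomial-generated invariant subspace `M` is the closed span of the monomials it contains:
the closed span of `M`'s monomials is itself invariant (the shifts send monomials to monomials)
and contains the generators. Each monomial `z^n ⊗ ζ` is an eigenvector of `S_k* S_k`, with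
eigenvalue `‖z^{n+e_k}‖² / ‖z^n‖²`, so `S_k* S_k` preserves that closed span. Hence `S_k*` maps
`S_k M`, and by continuity its closure, into `M`, where `1 - P_M` vanishes.
-/

lemma daWeight_pos {d : ℕ} (n : Fin d → ℕ) : 0 < daWeight n := by
  unfold daWeight
  positivity

lemma orthProjCLM_apply_of_mem {H : Type*} [NormedAddCommGroup H] [InnerProductSpace ℂ H]
    [CompleteSpace H] {M : Submodule ℂ H} (hM : IsClosed (M : Set H)) {x : H} (hx : x ∈ M) :
    orthProjCLM M x = x := by
  have : CompleteSpace M := hM.completeSpace_coe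
  rw [orthProjCLM, dif_pos hM]
  exact Submodule.starProjection_eq_self_iff.mpr hx

lemma sub_orthProjCLM_comp_eq_zero_of_mapsTo {H K : Type*} [NormedAddCommGroup H]
    [InnerProductSpace ℂ H] [CompleteSpace H] [NormedAddCommGroup K] [NormedSpace ℂ K]
    {M : Submodule ℂ H} (hM : IsClosed (M : Set H)) {A : K →L[ℂ] H} {N : Submodule ℂ K}
    (hA : ∀ x ∈ N, A x ∈ M) :
    ∀ x ∈ N.topologicalClosure, ((1 - orthProjCLM M) ∘L A) x = 0 := by
  set B : K →L[ℂ] H := (1 - orthProjCLM M) ∘L A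
  have hN : N ≤ B.ker := fun x hx => by
    simp [B, orthProjCLM_apply_of_mem hM (hA x hx)]
  exact Submodule.topologicalClosure_minimal N hN B.isClosed_ker

lemma topologicalClosure_span_mem_invtSubmodule {R V : Type*} [Semiring R] [TopologicalSpace R]
    [AddCommMonoid V] [TopologicalSpace V] [Module R V] [ContinuousSMul R V] [ContinuousAdd V]
    {T : V →L[R] V} {s : Set V} (hs : ∀ x ∈ s, T x ∈ Submodule.span R s) :
    (Submodule.span R s).topologicalClosure ∈ Module.End.invtSubmodule (T : V →ₗ[R] V) :=
  Submodule.topologicalClosure_mem_invtSubmodule <| by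
    rw [Module.End.mem_invtSubmodule, Submodule.span_le]
    exact hs

lemma shiftIndex_injective {d : ℕ} (k : Fin d) :
    Function.Injective fun (n : Fin d → ℕ) (i : Fin d) => if i = k then n i + 1 else n i := by
  intro n m h
  funext i
  have hi := congrFun h i
  simp only at hi
  split_ifs at hi <;> omega

namespace DShift

variable (D : DShift d E H₀)

def monomials : Set H₀ := {x | ∃ n ζ, x = D.mono n ζ}

lemma orthogonal_span_monomials : (Submodule.span ℂ D.monomials)ᗮ = ⊥ := by
  rw [← Submodule.orthogonal_closure, monomials, D.total, Submodule.top_orthogonal_eq_bot]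

lemma ext_inner_mono {x y : H₀} (h : ∀ n ζ, inner ℂ x (D.mono n ζ) = inner ℂ y (D.mono n ζ)) :
    x = y := by
  have hortho : Submodule.span ℂ {x - y} ⟂ Submodule.span ℂ D.monomials :=
    Submodule.isOrtho_span.mpr <| by
      rintro _ rfl _ ⟨n, ζ, rfl⟩
      rw [inner_sub_left, h, sub_self]
  have hxy := hortho.le (Submodule.mem_span_singleton_self (x - y))
  rwa [D.orthogonal_span_monomials, Submodule.mem_bot, sub_eq_zero] at hxy

lemma adjoint_mul_shift_mono [CompleteSpace H₀] (k : Fin d) (n : Fin d → ℕ) (ζ : E) :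
    (ContinuousLinearMap.adjoint (D.S k) * D.S k) (D.mono n ζ) =
      ((daWeight (fun i => if i = k then n i + 1 else n i) / daWeight n : ℝ) : ℂ) •
        D.mono n ζ := by
  refine D.ext_inner_mono fun m η => ?_
  rw [ContinuousLinearMap.mul_def, ContinuousLinearMap.comp_apply,
    ContinuousLinearMap.adjoint_inner_left, D.shift_mono, D.shift_mono, D.inner_mono,
    inner_smul_left, D.inner_mono]
  by_cases hnm : n = m
  · subst hnm
    have hw : (daWeight n : ℂ) ≠ 0 := Complex.ofReal_ne_zero.mpr (daWeight_pos n).ne'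
    rw [if_pos rfl, if_pos rfl, Complex.conj_ofReal, Complex.ofReal_div]
    field_simp
  · rw [if_neg fun h => hnm (shiftIndex_injective k h), if_neg hnm, mul_zero]

end DShift

section MonomialGenerated

variable {D : DShift d E H₀} {M : Submodule ℂ H₀}

lemma IsMonomialGenerated.eq_topologicalClosure_span (hM : IsMonomialGenerated D M) :
    M = (Submodule.span ℂ (D.monomials ∩ M)).topologicalClosure := by
  obtain ⟨hMclosed, hMinv, F, hFmono, hFM, hMmin⟩ := hM
  refine le_antisymm (hMmin _ (Submodule.isClosed_topologicalClosure _) ?_ ?_) ?_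
  · refine fun k => topologicalClosure_span_mem_invtSubmodule ?_
    rintro _ ⟨⟨n, ζ, rfl⟩, hnζ⟩
    exact Submodule.subset_span ⟨⟨_, ζ, D.shift_mono k n ζ⟩, hMinv k _ hnζ⟩
  · exact fun f hf => Submodule.le_topologicalClosure _
      (Submodule.subset_span ⟨hFmono f hf, hFM hf⟩)
  · exact Submodule.topologicalClosure_minimal _ (Submodule.span_le.mpr Set.inter_subset_right)
      hMclosed

lemma IsMonomialGenerated.adjoint_mul_shift_mem [CompleteSpace H₀]
    (hM : IsMonomialGenerated D M) (k : Fin d) :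
    ∀ x ∈ M, (ContinuousLinearMap.adjoint (D.S k) * D.S k) x ∈ M := by
  rw [hM.eq_topologicalClosure_span]
  refine topologicalClosure_span_mem_invtSubmodule ?_
  rintro _ ⟨⟨n, ζ, rfl⟩, hnζ⟩
  rw [D.adjoint_mul_shift_mono]
  exact Submodule.smul_mem _ _ (Submodule.subset_span ⟨⟨n, ζ, rfl⟩, hnζ⟩)

end MonomialGenerated

theorem statement4_general {H : Type*} [NormedAddCommGroup H] [InnerProductSpace ℂ H]
    [CompleteSpace H] (d r : ℕ) (hd : 0 < d)
    (D : DShift d (EuclideanSpace ℂ (Fin r)) H)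
    (M : Submodule ℂ H) (hM : IsMonomialGenerated D M) :
    (∀ x ∈ M, (ContinuousLinearMap.adjoint (D.S ⟨0, hd⟩) * D.S ⟨0, hd⟩) x ∈ M) ∧
      ∀ x ∈ (M.map (D.S ⟨0, hd⟩ : H →ₗ[ℂ] H)).topologicalClosure,
        ((1 - orthProjCLM M) ∘L ContinuousLinearMap.adjoint (D.S ⟨0, hd⟩)) x = 0 := by
  have hSM := hM.adjoint_mul_shift_mem ⟨0, hd⟩
  refine ⟨hSM, sub_orthProjCLM_comp_eq_zero_of_mapsTo hM.1 ?_⟩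
  rintro _ ⟨x, hx, rfl⟩
  exact hSM x hx

/-- Let `M` be a closed invariant subspace for the `d`-shift of rank `r`
generated by monomials.  Then `S₁* S₁` leaves `M` invariant, and consequently the
restriction of `(1 − P_M) S₁*` to `closure (S₁ M)` is zero. -/
theorem statement4 {H : Type*} [NormedAddCommGroup H] [InnerProductSpace ℂ H]
    [CompleteSpace H] (d r : ℕ) (hd : 0 < d) (hr : 0 < r)
    (D : DShift d (EuclideanSpace ℂ (Fin r)) H)
    (M : Submodule ℂ H) (hM : IsMonomialGenerated D M) :
    (∀ x ∈ M, (ContinuousLinearMap.adjoint (D.S ⟨0, hd⟩) * D.S ⟨0, hd⟩) x ∈ M) ∧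
      ∀ x ∈ (M.map (D.S ⟨0, hd⟩ : H →ₗ[ℂ] H)).topologicalClosure,
        ((1 - orthProjCLM M) ∘L ContinuousLinearMap.adjoint (D.S ⟨0, hd⟩)) x = 0 :=
  statement4_general d r hd D M hM

end Arveson
end
end

section
/- Let E = ℂ^r and let M ⊆ H²(ℂ^d) ⊗ E be a closed invariant subspace for the d-shift generated by a set of monomials. Then there exists a positive integer q such that M ⊖ S_1M is contained in the closed span of all monomials z_1^{n_1}z_2^{n_2}⋯z_d^{n_d} ⊗ ζ with n ∈ ℕ^d, n_1 ≤ q, and ζ ∈ E. -/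
open scoped ENNReal

noncomputable section

set_option synthInstance.maxHeartbeats 400000
set_option maxHeartbeats 1000000

namespace Arveson

variable {d : ℕ} {E : Type*} [NormedAddCommGroup E] [InnerProductSpace ℂ E]
  {H₀ : Type*} [NormedAddCommGroup H₀] [InnerProductSpace ℂ H₀]

/-! Let `G(m) = {ζ : z^m ⊗ ζ ∈ M}`. Invariance makes `m ↦ G(m)` monotone on `ℕ^d`, so Dickson's
lemma and the ascending chain condition in the finite-dimensional `E` give a level `q` with
`G(m) = G(m - e₁)` whenever `m₁ > q`. Since `M` is the closed span of the monomials it contains,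
every `x ∈ M` is orthogonal to `z^m ⊗ G(m)ᗮ`. If `m₁ > q`, then
`z^m ⊗ G(m) ⊆ S₁(z^{m-e₁} ⊗ G(m - e₁)) ⊆ S₁M`, so `x ⊥ S₁M` is orthogonal to `z^m ⊗ G(m)` as well.
Thus `x` is orthogonal to every monomial `z^m ⊗ ζ` with `m₁ > q`, and, the monomials being
orthogonal and total, `x` lies in the closed span of those with `m₁ ≤ q`. -/

open Function

theorem _root_.monotone_of_le_update_succ {ι α : Type*} [Fintype ι] [DecidableEq ι] [Preorder α]
    {f : (ι → ℕ) → α} (hf : ∀ m i, f m ≤ f (update m i (m i + 1))) : Monotone f := by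
  refine (monotone_iff_forall_covBy f).2 fun a b hab => ?_
  obtain ⟨i, hi, hne⟩ := Pi.covBy_iff.1 hab
  convert hf a i
  ext j
  rcases eq_or_ne j i with rfl | hj
  · simpa [eq_comm] using hi
  · simp [hj, hne j hj]

theorem _root_.Monotone.exists_forall_lt_le_update_pred {ι α : Type*} [Finite ι] [DecidableEq ι]
    [PartialOrder α] [WellFoundedGT α] {G : (ι → ℕ) → α} (hG : Monotone G) (k : ι) :
    ∃ q, ∀ m, q < m k → G m ≤ G (update m k (m k - 1)) := by
  by_contra! h
  choose f hfk hjump using h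
  -- Dickson's lemma gives a monotone subsequence, along which `G` must stabilise.
  obtain ⟨g, hg⟩ := wellQuasiOrdered_le.exists_monotone_subseq f
  obtain ⟨N, hN⟩ := WellFoundedGT.monotone_chain_condition
    (⟨fun t => G (f (g t)), fun a b hab => hG (hg a b hab)⟩ : ℕ →o α)
  set t := N + f (g N) k with ht
  have hkt : f (g N) k < f (g t) k := by
    have := hfk (g t)
    have : t ≤ g t := g.strictMono.id_le t
    omega
  have hle : f (g N) ≤ update (f (g t)) k (f (g t) k - 1) := by
    intro i
    rcases eq_or_ne i k with rfl | hi
    · simp only [update_self]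
      omega
    · simpa [hi] using hg N t (by omega) i
  exact hjump (g t) ((hN t (by omega)).ge.trans (hG hle))

theorem _root_.Submodule.mem_topologicalClosure_of_isOrtho {𝕜 E : Type*} [RCLike 𝕜]
    [NormedAddCommGroup E] [InnerProductSpace 𝕜 E] {K L : Submodule 𝕜 E} (hKL : K ⟂ L) {x : E}
    (hx : x ∈ (K ⊔ L).topologicalClosure) (hxL : x ∈ Lᗮ) : x ∈ K.topologicalClosure := by
  refine Metric.mem_closure_iff.2 fun ε hε => ?_
  obtain ⟨_, hkl, hdist⟩ := Metric.mem_closure_iff.1 hx ε hε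
  obtain ⟨k, hk, l, hl, rfl⟩ := Submodule.mem_sup.1 hkl
  refine ⟨k, hk, lt_of_le_of_lt ?_ hdist⟩
  -- `x - k ⊥ l`, so removing `l` can only bring the approximation closer (Pythagoras).
  have hperp : inner 𝕜 (x - k) l = 0 :=
    (Submodule.mem_orthogonal' _ _).1 (Submodule.sub_mem _ hxL (hKL hk)) l hl
  have hsq : ‖x - k‖ ^ 2 ≤ ‖x - (k + l)‖ ^ 2 := by
    rw [← sub_sub, @norm_sub_sq 𝕜 _ _ _ _ (x - k) l, hperp, map_zero, mul_zero, sub_zero]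
    nlinarith [norm_nonneg l]
  simpa only [dist_eq_norm] using (sq_le_sq₀ (norm_nonneg _) (norm_nonneg _)).1 hsq

namespace DShift

variable (D : DShift d E H₀)

local notation "⟪" x ", " y "⟫" => @inner ℂ _ _ x y

theorem shift_mono_update (k : Fin d) (n : Fin d → ℕ) (ζ : E) :
    D.S k (D.mono n ζ) = D.mono (update n k (n k + 1)) ζ := by
  rw [D.shift_mono]
  congr 2
  ext i
  by_cases h : i = k <;> simp [h]

def coeffSpace (M : Submodule ℂ H₀) (m : Fin d → ℕ) : Submodule ℂ E :=
  M.comap (D.mono m)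

def wanderingSubspace (M : Submodule ℂ H₀) (k : Fin d) : Submodule ℂ H₀ :=
  M ⊓ ((M.map (D.S k : H₀ →ₗ[ℂ] H₀)).topologicalClosure)ᗮ

variable {D} {M : Submodule ℂ H₀}

theorem monotone_coeffSpace (hM : IsInvariant D M) : Monotone (D.coeffSpace M) :=
  monotone_of_le_update_succ fun m k ζ hζ => by
    simpa only [coeffSpace, Submodule.mem_comap, shift_mono_update] using hM k _ hζ

theorem le_topologicalClosure_span_monomials (hM : IsMonomialGenerated D M) :
    M ≤ (Submodule.span ℂ {x | x ∈ M ∧ ∃ n ζ, x = D.mono n ζ}).topologicalClosure := by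
  obtain ⟨-, hMi, F, hF, hFM, hmin⟩ := hM
  refine hmin _ (Submodule.isClosed_topologicalClosure _) (fun k => ?_) fun f hf =>
    Submodule.le_topologicalClosure _ (Submodule.subset_span ⟨hFM hf, hF f hf⟩)
  have hspan : Submodule.span ℂ {x | x ∈ M ∧ ∃ n ζ, x = D.mono n ζ} ∈
      Module.End.invtSubmodule (D.S k : H₀ →ₗ[ℂ] H₀) := by
    refine (Module.End.mem_invtSubmodule _).2 (Submodule.span_le.2 ?_)
    rintro _ ⟨hx, n, ζ, rfl⟩
    exact Submodule.subset_span ⟨hMi k _ hx, _, ζ, D.shift_mono_update k n ζ⟩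
  exact fun x hx => Submodule.topologicalClosure_mem_invtSubmodule hspan hx

theorem inner_mono_eq_zero_of_mem_orthogonal (hM : IsMonomialGenerated D M) {x : H₀}
    (hx : x ∈ M) {m : Fin d → ℕ} {η : E} (hη : η ∈ (D.coeffSpace M m)ᗮ) :
    ⟪D.mono m η, x⟫ = 0 := by
  refine Submodule.topologicalClosure_minimal _ (Submodule.span_le.2 ?_)
    (innerSL ℂ (D.mono m η)).isClosed_ker (le_topologicalClosure_span_monomials hM hx)
  rintro _ ⟨hy, n, ζ, rfl⟩
  simp only [SetLike.mem_coe, LinearMap.mem_ker, ContinuousLinearMap.coe_coe,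
    innerSL_apply_apply, D.inner_mono]
  split_ifs with h
  · subst h
    rw [(Submodule.mem_orthogonal' _ _).1 hη ζ hy, mul_zero]
  · rfl

theorem exists_forall_inner_mono_eq_zero_of_mem_wanderingSubspace [FiniteDimensional ℂ E]
    (hM : IsMonomialGenerated D M) (k : Fin d) :
    ∃ q, ∀ x ∈ D.wanderingSubspace M k, ∀ m, q < m k → ∀ η, ⟪D.mono m η, x⟫ = 0 := by
  obtain ⟨q, hq⟩ := Monotone.exists_forall_lt_le_update_pred (monotone_coeffSpace hM.2.1) k
  refine ⟨q, fun x ⟨hxM, hxS⟩ m hm η => ?_⟩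
  obtain ⟨p, hp, p', hp', rfl⟩ := (D.coeffSpace M m).exists_add_mem_mem_orthogonal η
  rw [map_add, inner_add_left, inner_mono_eq_zero_of_mem_orthogonal hM hxM hp', add_zero]
  -- Beyond level `q` the coefficient space does not grow, so `z^m ⊗ p` already lies in `S_k M`.
  have hpS : D.mono m p ∈ M.map (D.S k : H₀ →ₗ[ℂ] H₀) := by
    refine ⟨D.mono (update m k (m k - 1)) p, hq m hm hp, ?_⟩
    rw [ContinuousLinearMap.coe_coe, shift_mono_update, update_idem, update_self,
      Nat.sub_add_cancel (by omega), update_eq_self]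
  exact (Submodule.mem_orthogonal _ _).1 hxS _ (Submodule.le_topologicalClosure _ hpS)

theorem mem_topologicalClosure_span_of_forall_inner_mono_eq_zero {k : Fin d} {q : ℕ} {x : H₀}
    (hx : ∀ m, q < m k → ∀ η, ⟪D.mono m η, x⟫ = 0) :
    x ∈ (Submodule.span ℂ {y | ∃ n ζ, n k ≤ q ∧ y = D.mono n ζ}).topologicalClosure := by
  refine Submodule.mem_topologicalClosure_of_isOrtho
    (L := Submodule.span ℂ {y | ∃ n ζ, q < n k ∧ y = D.mono n ζ}) ?_ ?_ ?_
  · refine Submodule.isOrtho_span.2 ?_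
    rintro _ ⟨n, ζ, hn, rfl⟩ _ ⟨n', ζ', hn', rfl⟩
    rw [D.inner_mono, if_neg (by rintro rfl; omega)]
  · rw [← Submodule.span_union]
    refine Submodule.topologicalClosure_mono (Submodule.span_mono ?_)
      (D.total ▸ Submodule.mem_top : x ∈ _)
    rintro _ ⟨n, ζ, rfl⟩
    exact (le_or_gt (n k) q).imp (fun h => ⟨n, ζ, h, rfl⟩) fun h => ⟨n, ζ, h, rfl⟩
  · refine (Submodule.isOrtho_span.2 ?_).symm (Submodule.mem_span_singleton_self x)
    rintro _ ⟨n, ζ, hn, rfl⟩ _ rfl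
    exact hx n hn ζ

theorem exists_wanderingSubspace_le [FiniteDimensional ℂ E] (hM : IsMonomialGenerated D M)
    (k : Fin d) : ∃ q, D.wanderingSubspace M k ≤
      (Submodule.span ℂ {y | ∃ n ζ, n k ≤ q ∧ y = D.mono n ζ}).topologicalClosure := by
  obtain ⟨q, hq⟩ := exists_forall_inner_mono_eq_zero_of_mem_wanderingSubspace hM k
  exact ⟨q, fun x hx => mem_topologicalClosure_span_of_forall_inner_mono_eq_zero (hq x hx)⟩

end DShift

theorem statement8_general {H : Type*} [NormedAddCommGroup H] [InnerProductSpace ℂ H]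
    (d r : ℕ) (hd : 0 < d)
    (D : DShift d (EuclideanSpace ℂ (Fin r)) H)
    (M : Submodule ℂ H) (hM : IsMonomialGenerated D M) :
    ∃ q : ℕ, 0 < q ∧
      M ⊓ ((M.map (D.S ⟨0, hd⟩ : H →ₗ[ℂ] H)).topologicalClosure)ᗮ ≤
        (Submodule.span ℂ
          {x : H | ∃ n ζ, n ⟨0, hd⟩ ≤ q ∧ x = D.mono n ζ}).topologicalClosure := by
  obtain ⟨q, hq⟩ := DShift.exists_wanderingSubspace_le hM ⟨0, hd⟩
  refine ⟨q + 1, q.succ_pos, hq.trans (Submodule.topologicalClosure_mono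
    (Submodule.span_mono ?_))⟩
  rintro _ ⟨n, ζ, hn, rfl⟩
  exact ⟨n, ζ, hn.trans q.le_succ, rfl⟩

/-- Let `M ⊆ H²(ℂ^d) ⊗ ℂ^r` be a closed invariant subspace for the
`d`-shift generated by monomials.  Then there is a positive integer `q` such that
`M ⊖ S₁M` is contained in the closed span of the monomials `z^n ⊗ ζ` with `n₁ ≤ q`. -/
theorem statement8 {H : Type*} [NormedAddCommGroup H] [InnerProductSpace ℂ H]
    [CompleteSpace H] (d r : ℕ) (hd : 0 < d) (hr : 0 < r)
    (D : DShift d (EuclideanSpace ℂ (Fin r)) H)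
    (M : Submodule ℂ H) (hM : IsMonomialGenerated D M) :
    ∃ q : ℕ, 0 < q ∧
      M ⊓ ((M.map (D.S ⟨0, hd⟩ : H →ₗ[ℂ] H)).topologicalClosure)ᗮ ≤
        (Submodule.span ℂ
          {x : H | ∃ n ζ, n ⟨0, hd⟩ ≤ q ∧ x = D.mono n ζ}).topologicalClosure :=
  statement8_general d r hd D M hM

end Arveson
end
end

section
/- Let Ā = (A_1,…,A_d) be a d-contraction on a Hilbert space H, let M be a closed subspace invariant under each A_k with orthogonal projection P, and write P^⊥ = 1 − P. Then for all 1 ≤ j, k ≤ d, the compression C_j = P^⊥A_jP^⊥ of A_j to M^⊥ satisfies, as operators on H, [C_j, C_k^*]P^⊥ = [P, A_k]^*[P, A_j] + P^⊥[A_j, A_k^*]P^⊥. -/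
/-!
Invariance of `M` under `A_j` says exactly that `(1 - P) A_j P = 0`. The difference of the two
sides of the identity expands to `-(P A_k^*) ((1 - P) A_j P) + A_k^* (P - P²) A_j`, so the
identity is pure algebra in a star ring once `P` is a self-adjoint idempotent.
-/

open scoped ENNReal

noncomputable section

set_option synthInstance.maxHeartbeats 400000
set_option maxHeartbeats 1000000

theorem IsIdempotentElem.compression_commutator_eq {R : Type*} [Ring R] {P a b : R}
    (hP : IsIdempotentElem P) (ha : (1 - P) * a * P = 0) :
    (1 - P) * a * b * (1 - P) - (1 - P) * b * (1 - P) * a * (1 - P) =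
      (b * P - P * b) * (P * a - a * P) + (1 - P) * (a * b - b * a) * (1 - P) := by
  have expand : (1 - P) * a * b * (1 - P) - (1 - P) * b * (1 - P) * a * (1 - P) -
      ((b * P - P * b) * (P * a - a * P) + (1 - P) * (a * b - b * a) * (1 - P)) =
      -(P * b * ((1 - P) * a * P)) + b * (P - P * P) * a := by
    noncomm_ring
  rw [← sub_eq_zero, expand, ha, hP.eq]
  simp

theorem IsStarProjection.compression_commutator_eq {R : Type*} [Ring R] [StarRing R]
    {P a c : R} (hP : IsStarProjection P) (ha : (1 - P) * a * P = 0) :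
    (1 - P) * a * star c * (1 - P) - (1 - P) * star c * (1 - P) * a * (1 - P) =
      star (P * c - c * P) * (P * a - a * P) + (1 - P) * (a * star c - star c * a) * (1 - P) := by
  rw [star_sub, star_mul, star_mul, hP.isSelfAdjoint.star_eq]
  exact hP.isIdempotentElem.compression_commutator_eq ha

theorem Submodule.one_sub_starProjection_mul_mul_starProjection {H : Type*}
    [NormedAddCommGroup H] [InnerProductSpace ℂ H] {M : Submodule ℂ H} [M.HasOrthogonalProjection]
    {T : H →L[ℂ] H} (hT : ∀ x ∈ M, T x ∈ M) :
    (1 - M.starProjection) * T * M.starProjection = 0 := by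
  ext x
  have hfix : M.starProjection (T (M.starProjection x)) = T (M.starProjection x) :=
    Submodule.starProjection_eq_self_iff.mpr (hT _ (M.starProjection_apply_mem x))
  simp [hfix]

namespace Arveson

theorem orthProjCLM_eq_starProjection {H : Type*} [NormedAddCommGroup H]
    [InnerProductSpace ℂ H] [CompleteSpace H] {M : Submodule ℂ H} [CompleteSpace M] :
    orthProjCLM M = M.starProjection := by
  rw [orthProjCLM, dif_pos (completeSpace_coe_iff_isComplete.mp ‹_›).isClosed]
  rfl

theorem statement12_general {H : Type*} [NormedAddCommGroup H] [InnerProductSpace ℂ H]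
    [CompleteSpace H] (d : ℕ) (A : Fin d → (H →L[ℂ] H))
    (M : Submodule ℂ H) (hMcl : IsClosed (M : Set H))
    (hInv : ∀ k, ∀ x ∈ M, A k x ∈ M)
    (P : H →L[ℂ] H) (hP : P = orthProjCLM M) (j k : Fin d) :
    (1 - P) * A j * star (A k) * (1 - P) - (1 - P) * star (A k) * (1 - P) * A j * (1 - P) =
      star (P * A k - A k * P) * (P * A j - A j * P) +
        (1 - P) * (A j * star (A k) - star (A k) * A j) * (1 - P) := by
  have : CompleteSpace M := hMcl.completeSpace_coe
  rw [orthProjCLM_eq_starProjection] at hP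
  subst hP
  exact isStarProjection_starProjection.compression_commutator_eq
    (M.one_sub_starProjection_mul_mul_starProjection (hInv j))

/-- Let `Ā` be a `d`-contraction, `M` a closed invariant subspace with
projection `P`, `P⊥ = 1 − P`, and `C_j = P⊥ A_j P⊥` the compression of `A_j` to `M⊥`.
Then `[C_j, C_k*] P⊥ = [P, A_k]* [P, A_j] + P⊥ [A_j, A_k*] P⊥`, with the left-hand side
read as `P⊥ A_j A_k* P⊥ − P⊥ A_k* P⊥ A_j P⊥`. -/
theorem statement12 {H : Type*} [NormedAddCommGroup H] [InnerProductSpace ℂ H]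
    [CompleteSpace H] (d : ℕ) (A : Fin d → (H →L[ℂ] H))
    (hcomm : ∀ i j, A i * A j = A j * A i)
    (hcontr : ((1 : H →L[ℂ] H) - ∑ k, A k * star (A k)).IsPositive)
    (M : Submodule ℂ H) (hMcl : IsClosed (M : Set H))
    (hInv : ∀ k, ∀ x ∈ M, A k x ∈ M)
    (P : H →L[ℂ] H) (hP : P = orthProjCLM M) (j k : Fin d) :
    (1 - P) * A j * star (A k) * (1 - P) - (1 - P) * star (A k) * (1 - P) * A j * (1 - P) =
      star (P * A k - A k * P) * (P * A j - A j * P) +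
        (1 - P) * (A j * star (A k) - star (A k) * A j) * (1 - P) :=
  statement12_general d A M hMcl hInv P hP j k

end Arveson
end
end
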